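/- Define a relation on pairs: [xy] ≺ [uv] iff y ≼ u. Then the map sending a pair [xy] to the ideal A[xy]A is a bijection from pairs onto indecomposable ideals such that [xy] ≺ [uv] iff (A[xy]A)·(A[uv]A) ≠ 0. Moreover this relation ≺ on pairs is transitive but is neither reflexive on all pairs nor irreflexive: [xy] ≺ [xy] holds iff x = y. -/

import Mathlib

open Classical in
/-- The generator `[xy]` of the incidence algebra over `ℂ`:
the "matrix unit" supported at `(x, y)` (zero unless `x ≤ y`). -/
noncomputable def gen {C : Type*} [PartialOrder C] (x y : C) :
    IncidenceAlgebra ℂ C :=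
  ⟨fun a b => if a = x ∧ b = y ∧ x ≤ y then 1 else 0, by
    intro a b hab
    try simp only
    rw [if_neg]
    rintro ⟨rfl, rfl, hxy⟩
    exact hab hxy⟩

/-- The product of two two-sided ideals: the two-sided ideal generated by pairwise products. -/
noncomputable def idealProd {R : Type*} [NonUnitalNonAssocRing R] (I J : TwoSidedIdeal R) :
    TwoSidedIdeal R :=
  TwoSidedIdeal.span {z | ∃ a ∈ I, ∃ b ∈ J, z = a * b}

/-- A two-sided ideal is indecomposable if it is nonzero and is not the sum (join)
of two ideals each distinct from itself. -/
def IsIndecomposable {R : Type*} [NonUnitalNonAssocRing R] (I : TwoSidedIdeal R) : Prop :=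
  I ≠ ⊥ ∧ ∀ I₁ I₂ : TwoSidedIdeal R, I = I₁ ⊔ I₂ → I₁ = I ∨ I₂ = I

set_option linter.unusedSectionVars false
section Helpers
open Finset
open scoped Classical
variable {C : Type*} [Fintype C] [PartialOrder C] [DecidableEq C] [LocallyFiniteOrder C]

lemma gen_apply (x y a b : C) :
    gen x y a b = if a = x ∧ b = y ∧ x ≤ y then 1 else 0 := by
  by_cases h : a = x ∧ b = y ∧ x ≤ y <;> simp [gen, h]

lemma gen_self_apply {x y : C} (h : x ≤ y) : gen x y x y = 1 := by
  rw [gen_apply, if_pos ⟨rfl, rfl, h⟩]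

lemma gen_ne_zero {x y : C} (h : x ≤ y) : gen x y ≠ (0 : IncidenceAlgebra ℂ C) := by
  intro h0
  have : gen x y x y = (0 : IncidenceAlgebra ℂ C) x y := by rw [h0]
  rw [gen_self_apply h, IncidenceAlgebra.zero_apply] at this
  exact one_ne_zero this

omit [Fintype C] in
lemma smul_mul_ia (c : ℂ) (f g : IncidenceAlgebra ℂ C) : (c • f) * g = c • (f * g) := by
  ext a b _
  simp [IncidenceAlgebra.mul_apply, IncidenceAlgebra.constSMul_apply, Finset.mul_sum, mul_assoc]

lemma gen_mul_gen (x y u v : C) (hxy : x ≤ y) (huv : u ≤ v) :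
    gen x y * gen u v = if y = u then gen (C := C) x v else 0 := by
  ext a b hab
  rw [IncidenceAlgebra.mul_apply]
  by_cases h : y = u
  · rw [if_pos h]
    by_cases hax : a = x
    · by_cases hbv : b = v
      · have hxv : x ≤ v := hxy.trans (h ▸ huv)
        rw [gen_apply, if_pos ⟨hax, hbv, hxv⟩]
        rw [Finset.sum_eq_single y]
        · rw [gen_apply, gen_apply, if_pos ⟨hax, rfl, hxy⟩, if_pos ⟨h, hbv, huv⟩, one_mul]
        · intro c _ hc
          rw [gen_apply, if_neg (by tauto), zero_mul]
        · intro hy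
          subst hax; subst hbv
          exact absurd (Finset.mem_Icc.2 ⟨hxy, h ▸ huv⟩) hy
      · rw [gen_apply, if_neg (by tauto)]
        apply Finset.sum_eq_zero
        intro c _
        rw [gen_apply u v c b, if_neg (by tauto), mul_zero]
    · rw [gen_apply, if_neg (by tauto)]
      apply Finset.sum_eq_zero
      intro c _
      rw [gen_apply x y a c, if_neg (by tauto), zero_mul]
  · rw [if_neg h, IncidenceAlgebra.zero_apply]
    apply Finset.sum_eq_zero
    intro c _
    by_cases hcy : c = y
    · rw [gen_apply u v c b, if_neg (fun hc => h (hcy.symm.trans hc.1)), mul_zero]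
    · rw [gen_apply x y a c, if_neg (by tauto), zero_mul]


/-- Evaluation at a pair, as an additive monoid hom. -/
def evalHom (a b : C) : IncidenceAlgebra ℂ C →+ ℂ where
  toFun f := f a b
  map_zero' := rfl
  map_add' _ _ := rfl

lemma eq_sum (f : IncidenceAlgebra ℂ C) :
    f = ∑ p : C × C, f p.1 p.2 • gen p.1 p.2 := by
  ext a b hab
  have : (∑ p : C × C, f p.1 p.2 • gen p.1 p.2) a b
      = ∑ p : C × C, (f p.1 p.2 • gen p.1 p.2) a b :=
    map_sum (evalHom a b) _ _
  rw [this]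
  rw [Finset.sum_eq_single (a, b)]
  · rw [IncidenceAlgebra.constSMul_apply, gen_apply, if_pos ⟨rfl, rfl, hab⟩,
      smul_eq_mul, mul_one]
  · intro p _ hp
    rw [IncidenceAlgebra.constSMul_apply, gen_apply, if_neg, smul_zero]
    rintro ⟨rfl, rfl, -⟩
    exact hp rfl
  · intro h
    exact absurd (Finset.mem_univ _) h

lemma genx_mul_apply (x : C) (f : IncidenceAlgebra ℂ C) (a c : C) :
    (gen x x * f) a c = if a = x then f x c else 0 := by
  rw [IncidenceAlgebra.mul_apply]
  by_cases hax : a = x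
  · subst hax
    rw [if_pos rfl]
    by_cases hxc : a ≤ c
    · rw [Finset.sum_eq_single a]
      · rw [gen_self_apply le_rfl, one_mul]
      · intro r _ hr
        rw [gen_apply, if_neg (by tauto), zero_mul]
      · intro h
        exact absurd (Finset.mem_Icc.2 ⟨le_rfl, hxc⟩) h
    · rw [Finset.Icc_eq_empty hxc, Finset.sum_empty,
        IncidenceAlgebra.apply_eq_zero_of_not_le hxc f]
  · rw [if_neg hax]
    apply Finset.sum_eq_zero
    intro r _
    rw [gen_apply, if_neg (by tauto), zero_mul]

lemma mul_geny_apply (y : C) (f : IncidenceAlgebra ℂ C) (a c : C) :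
    (f * gen y y) a c = if c = y then f a y else 0 := by
  rw [IncidenceAlgebra.mul_apply]
  by_cases hcy : c = y
  · subst hcy
    rw [if_pos rfl]
    by_cases hac : a ≤ c
    · rw [Finset.sum_eq_single c]
      · rw [gen_self_apply le_rfl, mul_one]
      · intro r _ hr
        rw [gen_apply, if_neg (by tauto), mul_zero]
      · intro h
        exact absurd (Finset.mem_Icc.2 ⟨hac, le_rfl⟩) h
    · rw [Finset.Icc_eq_empty hac, Finset.sum_empty,
        IncidenceAlgebra.apply_eq_zero_of_not_le hac f]
  · rw [if_neg hcy]
    apply Finset.sum_eq_zero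
    intro r _
    rw [gen_apply y y r c, if_neg (by tauto), mul_zero]

lemma sandwich (x y : C) (f : IncidenceAlgebra ℂ C) :
    gen x x * f * gen y y = f x y • gen x y := by
  ext a b hab
  rw [mul_geny_apply, IncidenceAlgebra.constSMul_apply, gen_apply, smul_eq_mul]
  by_cases hby : b = y
  · rw [if_pos hby, genx_mul_apply]
    by_cases hax : a = x
    · rw [if_pos hax]
      by_cases hxy : x ≤ y
      · rw [if_pos ⟨hax, hby, hxy⟩, mul_one]
      · rw [if_neg (by tauto), mul_zero,
          IncidenceAlgebra.apply_eq_zero_of_not_le hxy f]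
    · rw [if_neg hax, if_neg (by tauto), mul_zero]
  · rw [if_neg hby, if_neg (by tauto), mul_zero]

lemma smul_mem_ia (I : TwoSidedIdeal (IncidenceAlgebra ℂ C)) (c : ℂ)
    {g : IncidenceAlgebra ℂ C} (hg : g ∈ I) : c • g ∈ I := by
  have : c • g = (c • (1 : IncidenceAlgebra ℂ C)) * g := by
    rw [smul_mul_ia, one_mul]
  rw [this]
  exact I.mul_mem_left _ _ hg

lemma gen_mem_span {x y : C} : gen x y ∈ TwoSidedIdeal.span {gen (C := C) x y} :=
  TwoSidedIdeal.subset_span rfl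

lemma mem_span_gen_iff {x y : C} (hxy : x ≤ y) {f : IncidenceAlgebra ℂ C} :
    f ∈ TwoSidedIdeal.span {gen x y} ↔ ∀ a b : C, f a b ≠ 0 → a ≤ x ∧ y ≤ b := by
  constructor
  · intro hf
    refine fun a b hab => ?_
    let J : TwoSidedIdeal (IncidenceAlgebra ℂ C) := TwoSidedIdeal.mk'
      {g | ∀ a b : C, g a b ≠ 0 → a ≤ x ∧ y ≤ b}
      (fun a b h => absurd rfl h)
      (by
        intro g h hg hh a b hab
        by_cases h1 : g a b = 0
        · refine hh a b fun h2 => hab ?_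
          rw [IncidenceAlgebra.add_apply, h1, h2, add_zero]
        · exact hg a b h1)
      (by
        intro g hg a b hab
        refine hg a b fun h0 => hab ?_
        have : (-g) a b = -(g a b) := rfl
        rw [this, h0, neg_zero])
      (by
        intro g h hh a b hab
        rw [IncidenceAlgebra.mul_apply] at hab
        obtain ⟨c, -, hc⟩ := Finset.exists_ne_zero_of_sum_ne_zero hab
        have h1 : g a c ≠ 0 := fun h0 => hc (by rw [h0, zero_mul])
        have h2 : h c b ≠ 0 := fun h0 => hc (by rw [h0, mul_zero])
        obtain ⟨hcx, hyb⟩ := hh c b h2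
        exact ⟨(IncidenceAlgebra.le_of_ne_zero h1).trans hcx, hyb⟩)
      (by
        intro g h hg a b hab
        rw [IncidenceAlgebra.mul_apply] at hab
        obtain ⟨c, -, hc⟩ := Finset.exists_ne_zero_of_sum_ne_zero hab
        have h1 : g a c ≠ 0 := fun h0 => hc (by rw [h0, zero_mul])
        have h2 : h c b ≠ 0 := fun h0 => hc (by rw [h0, mul_zero])
        obtain ⟨hax, hyc⟩ := hg a c h1
        exact ⟨hax, hyc.trans (IncidenceAlgebra.le_of_ne_zero h2)⟩)
    have hJ : f ∈ J := by
      refine TwoSidedIdeal.mem_span_iff.1 hf J ?_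
      intro g hg
      rw [Set.mem_singleton_iff] at hg
      subst hg
      rw [SetLike.mem_coe, TwoSidedIdeal.mem_mk']
      intro a b h
      by_cases hc : a = x ∧ b = y ∧ x ≤ y
      · exact ⟨hc.1.le, hc.2.1.ge⟩
      · rw [gen_apply, if_neg hc] at h
        exact absurd rfl h
    rw [TwoSidedIdeal.mem_mk'] at hJ
    exact hJ a b hab
  · intro hsupp
    rw [show f = ∑ p : C × C, f p.1 p.2 • gen p.1 p.2 from eq_sum f]
    refine sum_mem fun p _ => ?_
    by_cases h0 : f p.1 p.2 = 0
    · rw [h0, zero_smul]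
      exact zero_mem _
    · obtain ⟨hpx, hyp⟩ := hsupp p.1 p.2 h0
      have key : gen p.1 p.2 = gen p.1 x * gen x y * gen y p.2 := by
        rw [gen_mul_gen p.1 x x y hpx hxy, if_pos rfl,
          gen_mul_gen p.1 y y p.2 (hpx.trans hxy) hyp, if_pos rfl]
      have h1 : gen p.1 x * gen x y ∈ TwoSidedIdeal.span {gen (C := C) x y} :=
        TwoSidedIdeal.mul_mem_left _ _ _ gen_mem_span
      have h2 : gen p.1 p.2 ∈ TwoSidedIdeal.span {gen (C := C) x y} := by
        rw [key]
        exact TwoSidedIdeal.mul_mem_right _ _ _ h1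
      exact smul_mem_ia _ _ h2


lemma span_le_of_gen_mem {x y : C} {K : TwoSidedIdeal (IncidenceAlgebra ℂ C)}
    (h : gen x y ∈ K) : TwoSidedIdeal.span {gen (C := C) x y} ≤ K := by
  rw [TwoSidedIdeal.le_iff]
  intro z hz
  exact TwoSidedIdeal.mem_span_iff.1 hz K (Set.singleton_subset_iff.2 h)

lemma span_le_of_apply_ne_zero {x y : C} {K : TwoSidedIdeal (IncidenceAlgebra ℂ C)}
    {f : IncidenceAlgebra ℂ C} (hf : f ∈ K) (h0 : f x y ≠ 0) :
    TwoSidedIdeal.span {gen (C := C) x y} ≤ K := by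
  apply span_le_of_gen_mem
  have : gen x y = (f x y)⁻¹ • (gen x x * f * gen y y) := by
    rw [sandwich, smul_smul, inv_mul_cancel₀ h0, one_smul]
  rw [this]
  exact smul_mem_ia _ _ (K.mul_mem_right _ _ (K.mul_mem_left _ _ hf))

end Helpers

section MainProof
open scoped Classical

/-- For pairs `[xy] ≺ [uv] ↔ y ≤ u`: the map `[xy] ↦ A[xy]A` is a bijection from
pairs onto indecomposable ideals with `[xy] ≺ [uv] ↔ (A[xy]A)·(A[uv]A) ≠ 0`; moreover
`≺` is transitive and `[xy] ≺ [xy] ↔ x = y` (so it is neither reflexive nor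
irreflexive). -/
theorem interval_order_on_indecomposables {C : Type*} [Fintype C] [PartialOrder C] [DecidableEq C] [LocallyFiniteOrder C] :
    Function.Injective
      (fun p : {p : C × C // p.1 ≤ p.2} => TwoSidedIdeal.span {gen p.1.1 p.1.2}) ∧
    (∀ p : {p : C × C // p.1 ≤ p.2},
      IsIndecomposable (TwoSidedIdeal.span {gen p.1.1 p.1.2})) ∧
    (∀ I : TwoSidedIdeal (IncidenceAlgebra ℂ C), IsIndecomposable I →
      ∃ p : {p : C × C // p.1 ≤ p.2}, I = TwoSidedIdeal.span {gen p.1.1 p.1.2}) ∧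
    (∀ p q : {p : C × C // p.1 ≤ p.2}, p.1.2 ≤ q.1.1 ↔
      idealProd (TwoSidedIdeal.span {gen p.1.1 p.1.2})
        (TwoSidedIdeal.span {gen q.1.1 q.1.2}) ≠ ⊥) ∧
    (∀ p q r : {p : C × C // p.1 ≤ p.2},
      p.1.2 ≤ q.1.1 → q.1.2 ≤ r.1.1 → p.1.2 ≤ r.1.1) ∧
    (∀ p : {p : C × C // p.1 ≤ p.2}, (p.1.2 ≤ p.1.1 ↔ p.1.1 = p.1.2)) := by 
  classical
  refine ⟨?_, ?_, ?_, ?_, ?_, ?_⟩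
  · -- injectivity
    rintro ⟨⟨x, y⟩, hxy⟩ ⟨⟨u, v⟩, huv⟩ h
    simp only at h
    have h1 : gen x y ∈ TwoSidedIdeal.span {gen (C := C) u v} := h ▸ gen_mem_span
    have h2 : gen u v ∈ TwoSidedIdeal.span {gen (C := C) x y} := h ▸ gen_mem_span
    obtain ⟨hxu, hvy⟩ := (mem_span_gen_iff huv).1 h1 x y (by rw [gen_self_apply hxy]; exact one_ne_zero)
    obtain ⟨hux, hyv⟩ := (mem_span_gen_iff hxy).1 h2 u v (by rw [gen_self_apply huv]; exact one_ne_zero)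
    exact Subtype.ext (Prod.ext (le_antisymm hxu hux) (le_antisymm hyv hvy))
  · -- indecomposable
    rintro ⟨⟨x, y⟩, hxy⟩
    simp only
    constructor
    · intro hbot
      have := hbot ▸ gen_mem_span (x := x) (y := y)
      rw [TwoSidedIdeal.mem_bot] at this
      exact gen_ne_zero hxy this
    · intro I₁ I₂ hI
      have hmem : gen x y ∈ I₁ ⊔ I₂ := hI ▸ gen_mem_span
      obtain ⟨f, hf, g, hg, hfg⟩ := TwoSidedIdeal.mem_sup.1 hmem
      have hsum : f x y + g x y = 1 := by
        have := congrArg (evalHom x y) hfg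
        rw [map_add] at this
        simpa [evalHom, gen_self_apply hxy] using this
      have hle₁ : I₁ ≤ TwoSidedIdeal.span {gen (C := C) x y} := hI ▸ le_sup_left
      have hle₂ : I₂ ≤ TwoSidedIdeal.span {gen (C := C) x y} := hI ▸ le_sup_right
      by_cases h0 : f x y = 0
      · right
        have hg0 : g x y ≠ 0 := by
          intro h
          rw [h0, h, add_zero] at hsum
          exact zero_ne_one hsum
        exact le_antisymm hle₂ (span_le_of_apply_ne_zero hg hg0)
      · left
        exact le_antisymm hle₁ (span_le_of_apply_ne_zero hf h0)
  · -- surjectivity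
    rintro I ⟨hne, hdec⟩
    set gsp : C × C → TwoSidedIdeal (IncidenceAlgebra ℂ C) :=
      fun p => TwoSidedIdeal.span {gen p.1 p.2} with hgsp
    set S : Finset (C × C) :=
      Finset.univ.filter (fun p : C × C => p.1 ≤ p.2 ∧ gen p.1 p.2 ∈ I) with hS
    have hIS : I = S.sup gsp := by
      apply le_antisymm
      · rw [TwoSidedIdeal.le_iff]
        intro z hz
        rw [SetLike.mem_coe, show z = ∑ p : C × C, z p.1 p.2 • gen p.1 p.2 from eq_sum z]
        refine sum_mem fun p _ => ?_
        by_cases h0 : z p.1 p.2 = 0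
        · rw [h0, zero_smul]; exact zero_mem _
        · have hp12 : p.1 ≤ p.2 := by
            by_contra hc
            exact h0 (IncidenceAlgebra.apply_eq_zero_of_not_le hc z)
          have hgenI : gen p.1 p.2 ∈ I := by
            have : gen p.1 p.2 = (z p.1 p.2)⁻¹ • (gen p.1 p.1 * z * gen p.2 p.2) := by
              rw [sandwich, smul_smul, inv_mul_cancel₀ h0, one_smul]
            rw [this]
            exact smul_mem_ia _ _ (I.mul_mem_right _ _ (I.mul_mem_left _ _ hz))
          have hpS : p ∈ S := by
            rw [hS, Finset.mem_filter]
            exact ⟨Finset.mem_univ _, hp12, hgenI⟩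
          exact Finset.le_sup (f := gsp) hpS (smul_mem_ia _ _ gen_mem_span)
      · refine Finset.sup_le fun p hp => ?_
        rw [hS, Finset.mem_filter] at hp
        exact span_le_of_gen_mem hp.2.2
    have key : ∀ T : Finset (C × C), I = T.sup gsp → ∃ p ∈ T, gsp p = I := by
      intro T
      induction T using Finset.induction with
      | empty =>
        intro h
        rw [Finset.sup_empty] at h
        exact absurd h hne
      | insert _ _ ha ih =>
        intro h
        rw [Finset.sup_insert] at h
        rcases hdec _ _ h with h1 | h1
        · exact ⟨_, Finset.mem_insert_self _ _, h1⟩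
        · obtain ⟨p, hp, hgp⟩ := ih h1.symm
          exact ⟨p, Finset.mem_insert_of_mem hp, hgp⟩
    obtain ⟨p, hp, hgp⟩ := key S hIS
    rw [hS, Finset.mem_filter] at hp
    exact ⟨⟨p, hp.2.1⟩, hgp.symm⟩
  · -- product criterion
    rintro ⟨⟨x, y⟩, hxy⟩ ⟨⟨u, v⟩, huv⟩
    simp only
    constructor
    · intro h hbot
      have hxu : x ≤ u := hxy.trans h
      have haI : gen x u ∈ TwoSidedIdeal.span {gen (C := C) x y} := by
        rw [mem_span_gen_iff hxy]
        intro a b hab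
        by_cases hc : a = x ∧ b = u ∧ x ≤ u
        · exact ⟨hc.1.le, by rw [hc.2.1]; exact h⟩
        · rw [gen_apply, if_neg hc] at hab
          exact absurd rfl hab
      have hprod : gen (C := C) x v ∈ idealProd (TwoSidedIdeal.span {gen (C := C) x y})
          (TwoSidedIdeal.span {gen (C := C) u v}) := by
        apply TwoSidedIdeal.subset_span
        refine ⟨gen x u, haI, gen u v, gen_mem_span, ?_⟩
        rw [gen_mul_gen x u u v hxu huv, if_pos rfl]
      rw [hbot, TwoSidedIdeal.mem_bot] at hprod
      exact gen_ne_zero (hxu.trans huv) hprod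
    · intro hne
      by_contra hyu
      apply hne
      rw [eq_bot_iff, TwoSidedIdeal.le_iff]
      intro z hz
      rw [SetLike.mem_coe]
      refine TwoSidedIdeal.mem_span_iff.1 hz ⊥ ?_
      rintro w ⟨a, ha, b, hb, rfl⟩
      rw [SetLike.mem_coe, TwoSidedIdeal.mem_bot]
      ext p q hpq
      rw [IncidenceAlgebra.mul_apply, IncidenceAlgebra.zero_apply]
      refine Finset.sum_eq_zero fun c _ => ?_
      by_cases h1 : a p c = 0
      · rw [h1, zero_mul]
      · by_cases h2 : b c q = 0
        · rw [h2, mul_zero]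
        · obtain ⟨-, hyc⟩ := (mem_span_gen_iff hxy).1 ha p c h1
          obtain ⟨hcu, -⟩ := (mem_span_gen_iff huv).1 hb c q h2
          exact absurd (hyc.trans hcu) hyu
  · -- transitivity
    rintro ⟨⟨x, y⟩, hxy⟩ ⟨⟨u, v⟩, huv⟩ ⟨⟨s, t⟩, hst⟩ h1 h2
    exact h1.trans (huv.trans h2)
  · -- reflexivity criterion
    rintro ⟨⟨x, y⟩, hxy⟩
    exact ⟨fun h => le_antisymm hxy h, fun h => h ▸ le_rfl⟩

end MainProof
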